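/- arXiv:1203.1080 — 2 statements merged into one kernel-verified Lean document; each statement's English description precedes it below -/
import Mathlib

section
/- Define s_Y ∈ {0,1}^{2^m} recursively by strings g_0, g_1, ..., g_m where g_0 = "1", and for 1 ≤ i ≤ m, g_i = g_{i-1} ++ g_{i-1} if i ∉ Y, and g_i = g_{i-1} ++ 0^{2^{i-1}} if i ∈ Y. Then for every X ⊆ {1,...,m}, the character of g_m at position ∑_{i∈X} 2^{i-1} is 1 if and only if X ∩ Y = ∅. -/
/-- The string `g_i` built from a set `Y` of positive integers:
`g_0 = "1"`, `g_i = g_{i-1} ++ g_{i-1}` if `i ∉ Y`, and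
`g_i = g_{i-1} ++ 0^{2^{i-1}}` if `i ∈ Y`. -/
def gSD (Y : Finset ℕ) : ℕ → List Bool
  | 0 => [true]
  | (i + 1) =>
      if (i + 1) ∈ Y then gSD Y i ++ List.replicate (2 ^ i) false
      else gSD Y i ++ gSD Y i

lemma gSD_length (Y : Finset ℕ) (m : ℕ) : (gSD Y m).length = 2 ^ m := by
  induction m with
  | zero => simp [gSD]
  | succ n ih => simp only [gSD]; split <;> simp [ih, pow_succ] <;> ring

lemma gSD_congr (Y Y' : Finset ℕ) (m : ℕ) (h : ∀ i, i ≤ m → (i ∈ Y ↔ i ∈ Y')) :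
    gSD Y m = gSD Y' m := by
  induction m with
  | zero => simp [gSD]
  | succ n ih =>
    have hih := ih (fun i hi => h i (hi.trans (Nat.le_succ n)))
    simp only [gSD, hih]
    by_cases hm : n + 1 ∈ Y
    · rw [if_pos hm, if_pos ((h (n+1) le_rfl).mp hm)]
    · rw [if_neg hm, if_neg (fun hc => hm ((h (n+1) le_rfl).mpr hc))]

lemma sum_lt_pow (m : ℕ) (X : Finset ℕ) (hX : X ⊆ Finset.Icc 1 m) :
    ∑ i ∈ X, 2 ^ (i - 1) < 2 ^ m := by
  induction m generalizing X with
  | zero =>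
    have : X = ∅ := by simpa using hX
    simp [this]
  | succ n ih =>
    by_cases hm : n + 1 ∈ X
    · have hX' : X.erase (n+1) ⊆ Finset.Icc 1 n := by
        intro i hi
        have h1 := Finset.mem_of_mem_erase hi
        have h2 := Finset.ne_of_mem_erase hi
        have := hX h1
        simp only [Finset.mem_Icc] at this ⊢
        exact ⟨this.1, by omega⟩
      have := ih (X.erase (n+1)) hX'
      rw [← Finset.add_sum_erase _ _ hm]
      simp only [Nat.add_sub_cancel]
      calc 2 ^ n + ∑ i ∈ X.erase (n+1), 2 ^ (i-1) < 2 ^ n + 2 ^ n := by omega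
        _ = 2 ^ (n+1) := by ring
    · have hX' : X ⊆ Finset.Icc 1 n := by
        intro i hi
        have := hX hi
        simp only [Finset.mem_Icc] at this ⊢
        have h2 : i ≠ n+1 := fun hc => hm (hc ▸ hi)
        omega
      have := ih X hX'
      have : (2:ℕ)^n ≤ 2^(n+1) := Nat.pow_le_pow_right (by norm_num) (Nat.le_succ n)
      omega

/-- for every `X ⊆ {1,...,m}`, the character of `g_m` at position
`∑_{i∈X} 2^{i-1}` is `1` iff `X ∩ Y = ∅`. -/
theorem stmt1 (m : ℕ) (Y : Finset ℕ) (hY : Y ⊆ Finset.Icc 1 m)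
    (X : Finset ℕ) (hX : X ⊆ Finset.Icc 1 m) :
    ((gSD Y m).getD (∑ i ∈ X, 2 ^ (i - 1)) false = true ↔ X ∩ Y = ∅) := by
  induction m generalizing Y X with
  | zero =>
    have hx : X = ∅ := by simpa using hX
    have hy : Y = ∅ := by simpa using hY
    simp [hx, hy, gSD]
  | succ n ih =>
    by_cases hmX : n + 1 ∈ X
    · -- position = 2^n + q
      have hX' : X.erase (n+1) ⊆ Finset.Icc 1 n := by
        intro i hi
        have h1 := Finset.mem_of_mem_erase hi
        have h2 := Finset.ne_of_mem_erase hi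
        have := hX h1
        simp only [Finset.mem_Icc] at this ⊢
        exact ⟨this.1, by omega⟩
      have hq := sum_lt_pow n _ hX'
      have hsum : ∑ i ∈ X, 2 ^ (i-1) = 2 ^ n + ∑ i ∈ X.erase (n+1), 2 ^ (i-1) := by
        rw [← Finset.add_sum_erase _ _ hmX]; simp
      by_cases hmY : n + 1 ∈ Y
      · -- value is false, and X ∩ Y ≠ ∅
        have hne : X ∩ Y ≠ ∅ := by
          intro h
          have : n + 1 ∈ X ∩ Y := Finset.mem_inter.mpr ⟨hmX, hmY⟩
          simp [h] at this
        simp only [gSD, if_pos hmY, hsum]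
        rw [List.getD_append_right _ _ _ _ (by rw [gSD_length]; omega)]
        rw [gSD_length]
        simp only [Nat.add_sub_cancel_left]
        constructor
        · intro h
          rw [List.getD_eq_getElem?_getD] at h
          rcases Nat.lt_or_ge (∑ i ∈ X.erase (n+1), 2 ^ (i-1)) (2^n) with hlt | hge
          · rw [List.getElem?_eq_getElem (by simpa using hlt)] at h
            simp [List.getElem_replicate] at h
          · rw [List.getElem?_eq_none (by simpa using hge)] at h
            simp at h
        · intro h; exact absurd h hne
      · -- Y ⊆ Icc 1 n
        have hY' : Y ⊆ Finset.Icc 1 n := by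
          intro i hi
          have := hY hi
          simp only [Finset.mem_Icc] at this ⊢
          refine ⟨this.1, ?_⟩
          by_contra hc
          have : i = n + 1 := by omega
          exact hmY (this ▸ hi)
        simp only [gSD, if_neg hmY, hsum]
        rw [List.getD_append_right _ _ _ _ (by rw [gSD_length]; omega)]
        rw [gSD_length]
        simp only [Nat.add_sub_cancel_left]
        rw [ih Y hY' _ hX']
        constructor
        · intro h
          ext i
          simp only [Finset.mem_inter, Finset.notMem_empty, iff_false, not_and]
          intro hiX hiY
          have hin : i ≠ n + 1 := fun hc => hmY (hc ▸ hiY)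
          have : i ∈ (X.erase (n+1)) ∩ Y := Finset.mem_inter.mpr ⟨Finset.mem_erase.mpr ⟨hin, hiX⟩, hiY⟩
          simp [h] at this
        · intro h
          ext i
          simp only [Finset.mem_inter, Finset.notMem_empty, iff_false, not_and, Finset.mem_erase]
          intro hi hiY
          have : i ∈ X ∩ Y := Finset.mem_inter.mpr ⟨hi.2, hiY⟩
          simp [h] at this
    · -- n+1 ∉ X : position < 2^n, lands in prefix
      have hX' : X ⊆ Finset.Icc 1 n := by
        intro i hi
        have := hX hi
        simp only [Finset.mem_Icc] at this ⊢
        refine ⟨this.1, ?_⟩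
        by_contra hc
        have : i = n + 1 := by omega
        exact hmX (this ▸ hi)
      have hq := sum_lt_pow n X hX'
      have hY' : Y.erase (n+1) ⊆ Finset.Icc 1 n := by
        intro i hi
        have h1 := Finset.mem_of_mem_erase hi
        have h2 := Finset.ne_of_mem_erase hi
        have := hY h1
        simp only [Finset.mem_Icc] at this ⊢
        exact ⟨this.1, by omega⟩
      have hcong : gSD Y n = gSD (Y.erase (n+1)) n := by
        apply gSD_congr
        intro i hi
        simp only [Finset.mem_erase]
        constructor
        · intro h; exact ⟨by omega, h⟩
        · exact fun h => h.2
      have hpre : (gSD Y (n+1)).getD (∑ i ∈ X, 2 ^ (i-1)) false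
          = (gSD Y n).getD (∑ i ∈ X, 2 ^ (i-1)) false := by
        simp only [gSD]
        split <;> exact List.getD_append _ _ _ _ (by rw [gSD_length]; omega)
      rw [hpre, hcong, ih (Y.erase (n+1)) hY' X hX']
      constructor
      · intro h
        ext i
        simp only [Finset.mem_inter, Finset.notMem_empty, iff_false, not_and]
        intro hiX hiY
        have hin : i ≠ n + 1 := fun hc => hmX (hc ▸ hiX)
        have : i ∈ X ∩ (Y.erase (n+1)) := Finset.mem_inter.mpr ⟨hiX, Finset.mem_erase.mpr ⟨hin, hiY⟩⟩
        simp [h] at this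
      · intro h
        ext i
        simp only [Finset.mem_inter, Finset.notMem_empty, iff_false, not_and, Finset.mem_erase]
        intro hiX hne hiY
        have : i ∈ X ∩ Y := Finset.mem_inter.mpr ⟨hiX, hiY⟩
        simp [h] at this
end

section
/- Let T be a complete binary tree of depth d with 2^d binary leaves, where each internal node derives the concatenation of its children's strings. Suppose the leaf values are updated along a single root-to-leaf path by flipping, at each node on the path, the string of its right child to its bitwise negation below the update point. Then the new root string can be represented by introducing at most 2d new SLP symbols, given that SLP symbols for every node of T and for the negation of every node of T are already available. -/
/-- A straight-line program with `n` symbols over alphabet `α`. -/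
structure SLP (n : ℕ) (α : Type*) where
  rule : Fin n → α ⊕ (Fin n × Fin n)
  lt : ∀ i j k, rule i = Sum.inr (j, k) → j < i ∧ k < i

/-- The string derived by symbol `i` of an SLP. -/
def SLP.expand {n : ℕ} {α : Type*} (S : SLP n α) (i : Fin n) : List α :=
  match h : S.rule i with
  | Sum.inl c => [c]
  | Sum.inr (j, k) => S.expand j ++ S.expand k
termination_by i.val
decreasing_by
  · exact (S.lt i j k h).1
  · exact (S.lt i j k h).2

theorem SLP.expand_inl {n α} (S : SLP n α) {i : Fin n} {c : α} (h : S.rule i = Sum.inl c) :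
    S.expand i = [c] := by
  rw [SLP.expand]; split <;> simp_all

theorem SLP.expand_inr {n α} (S : SLP n α) {i j k : Fin n} (h : S.rule i = Sum.inr (j, k)) :
    S.expand i = S.expand j ++ S.expand k := by
  rw [SLP.expand]; split <;> simp_all

/-- Extend an SLP with one new concatenation symbol. -/
def SLP.snocC {n : ℕ} {α : Type*} (S : SLP n α) (a b : Fin n) : SLP (n + 1) α where
  rule i := if h : i.val < n then
      match S.rule ⟨i.val, h⟩ with
      | Sum.inl c => Sum.inl c
      | Sum.inr (p, q) => Sum.inr (p.castSucc, q.castSucc)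
    else Sum.inr (a.castSucc, b.castSucc)
  lt i j k hi := by
    by_cases h : i.val < n
    · simp only [dif_pos h] at hi
      rcases hr : S.rule ⟨i.val, h⟩ with c | ⟨p, q⟩ <;> rw [hr] at hi
      · simp at hi
      · simp only [Sum.inr.injEq, Prod.mk.injEq] at hi
        have := S.lt ⟨i.val, h⟩ p q hr
        constructor
        · rw [← hi.1]; exact this.1
        · rw [← hi.2]; exact this.2
    · simp only [dif_neg h] at hi
      have hiv : i.val = n := by omega
      simp only [Sum.inr.injEq, Prod.mk.injEq] at hi
      constructor
      · rw [← hi.1]; show (a.castSucc).val < i.val; simp only [Fin.coe_castSucc, hiv]; exact a.isLt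
      · rw [← hi.2]; show (b.castSucc).val < i.val; simp only [Fin.coe_castSucc, hiv]; exact b.isLt

/-- Extend an SLP with one new terminal symbol. -/
def SLP.snocT {n : ℕ} {α : Type*} (S : SLP n α) (c : α) : SLP (n + 1) α where
  rule i := if h : i.val < n then
      match S.rule ⟨i.val, h⟩ with
      | Sum.inl c => Sum.inl c
      | Sum.inr (p, q) => Sum.inr (p.castSucc, q.castSucc)
    else Sum.inl c
  lt i j k hi := by
    by_cases h : i.val < n
    · simp only [dif_pos h] at hi
      rcases hr : S.rule ⟨i.val, h⟩ with c | ⟨p, q⟩ <;> rw [hr] at hi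
      · simp at hi
      · simp only [Sum.inr.injEq, Prod.mk.injEq] at hi
        have := S.lt ⟨i.val, h⟩ p q hr
        constructor
        · rw [← hi.1]; exact this.1
        · rw [← hi.2]; exact this.2
    · simp only [dif_neg h] at hi
      simp at hi

theorem SLP.expand_hom {n n' : ℕ} {α : Type*} (S : SLP n α) (T : SLP n' α) (e : Fin n → Fin n')
    (he : ∀ i, T.rule (e i) = Sum.map id (Prod.map e e) (S.rule i)) :
    ∀ i, T.expand (e i) = S.expand i := by
  suffices h : ∀ v, ∀ i : Fin n, i.val ≤ v → T.expand (e i) = S.expand i by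
    intro i; exact h i.val i le_rfl
  intro v
  induction v with
  | zero =>
    intro i hi
    rcases h : S.rule i with c | ⟨a, b⟩
    · rw [S.expand_inl h, T.expand_inl (c := c) (by rw [he, h]; rfl)]
    · have := (S.lt i a b h).1
      have : a.val < i.val := this
      omega
  | succ v ihv =>
    intro i hi
    rcases h : S.rule i with c | ⟨a, b⟩
    · rw [S.expand_inl h, T.expand_inl (c := c) (by rw [he, h]; rfl)]
    · have hab := S.lt i a b h
      have ha : a.val < i.val := hab.1
      have hb : b.val < i.val := hab.2
      rw [S.expand_inr h, T.expand_inr (j := e a) (k := e b) (by rw [he, h]; rfl),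
        ihv a (by omega), ihv b (by omega)]

theorem SLP.snocC_expand_castSucc {n α} (S : SLP n α) (a b : Fin n) (i : Fin n) :
    (S.snocC a b).expand i.castSucc = S.expand i := by
  refine SLP.expand_hom S _ Fin.castSucc (fun i => ?_) i
  show (if h : (i.castSucc).val < n then _ else _) = _
  rw [dif_pos (show (i.castSucc).val < n from i.isLt)]
  rcases h : S.rule ⟨(i.castSucc).val, i.isLt⟩ with c | ⟨p, q⟩ <;>
    · have : (⟨(i.castSucc).val, i.isLt⟩ : Fin n) = i := rfl
      rw [this] at h; rw [h]; rfl

theorem SLP.snocT_expand_castSucc {n α} (S : SLP n α) (c : α) (i : Fin n) :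
    (S.snocT c).expand i.castSucc = S.expand i := by
  refine SLP.expand_hom S _ Fin.castSucc (fun i => ?_) i
  show (if h : (i.castSucc).val < n then _ else _) = _
  rw [dif_pos (show (i.castSucc).val < n from i.isLt)]
  rcases h : S.rule ⟨(i.castSucc).val, i.isLt⟩ with c | ⟨p, q⟩ <;>
    · have : (⟨(i.castSucc).val, i.isLt⟩ : Fin n) = i := rfl
      rw [this] at h; rw [h]; rfl

theorem SLP.snocC_expand_last {n α} (S : SLP n α) (a b : Fin n) :
    (S.snocC a b).expand (Fin.last n) = S.expand a ++ S.expand b := by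
  have hr : (S.snocC a b).rule (Fin.last n) = Sum.inr (a.castSucc, b.castSucc) := by
    show (if h : (Fin.last n).val < n then _ else _) = _
    rw [dif_neg (by simp)]
  rw [SLP.expand_inr _ hr, SLP.snocC_expand_castSucc, SLP.snocC_expand_castSucc]

theorem target_eq (N x : ℕ) (s : List Bool) (hN : s.length = N) (hx : x ≤ N) :
    List.ofFn (fun k : Fin N => xor (s.getD (k : ℕ) false) (decide (x ≤ (k : ℕ)))) =
      s.take x ++ (s.drop x).map (fun c => !c) := by
  subst hN
  apply List.ext_getElem
  · simp; omega
  · intro i h1 h2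
    simp only [List.getElem_ofFn]
    by_cases hi : i < x
    · rw [List.getElem_append_left (by simp; omega)]
      rw [List.getElem_take]
      rw [List.getD_eq_getElem s false (by simpa using h1)]
      simp [Nat.not_le.mpr hi]
    · rw [List.getElem_append_right (by simp; omega)]
      simp only [List.getElem_map, List.getElem_drop]
      rw [List.getD_eq_getElem s false (by simpa using h1)]
      have hxi : x ≤ i := Nat.not_lt.mp hi
      have hidx : x + (i - x ⊓ s.length) = i := by omega
      simp [hxi, hidx]

theorem core (m : ℕ) (S : SLP m Bool) : ∀ (d : ℕ) (s : List Bool), s.length = 2 ^ d →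
    (∀ i ≤ d, ∀ b < 2 ^ (d - i),
      (∃ j : Fin m, S.expand j = ((s.drop (b * 2 ^ i)).take (2 ^ i))) ∧
      (∃ j : Fin m, S.expand j = ((s.drop (b * 2 ^ i)).take (2 ^ i)).map (fun c => !c))) →
    ∀ x, x < 2 ^ d →
    ∃ S' : SLP (m + 2 * d) Bool,
      (∀ i : Fin m, S'.expand (Fin.castLE (Nat.le_add_right m (2 * d)) i) = S.expand i) ∧
      ∃ j : Fin (m + 2 * d), S'.expand j = s.take x ++ (s.drop x).map (fun c => !c) := by
  intro d
  induction d with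
  | zero =>
    intro s hs hsym x hx
    interval_cases x
    obtain ⟨-, j, hj⟩ := hsym 0 le_rfl 0 (by norm_num)
    refine ⟨S, fun i => by simp [Fin.castLE], j, ?_⟩
    simp only [List.take_zero, List.drop_zero, List.nil_append]
    rw [hj]
    congr 1
    simp only [pow_zero] at hs ⊢
    simp [List.take_of_length_le (le_of_eq hs)]
  | succ d ih =>
    intro s hs hsym x hx
    set s₀ := s.take (2 ^ d) with hs₀def
    set s₁ := s.drop (2 ^ d) with hs₁def
    have hle : 2 ^ d ≤ 2 ^ (d + 1) := Nat.pow_le_pow_right (by norm_num) (by omega)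
    have hs₀ : s₀.length = 2 ^ d := by simp [hs₀def, hs]; omega
    have hs₁ : s₁.length = 2 ^ d := by simp [hs₁def, hs]; omega
    have hpow : ∀ i ≤ d, 2 ^ (d - i) * 2 ^ i = 2 ^ d := by
      intro i hi; rw [← pow_add]; congr 1; omega
    -- blocks of s₀ are blocks of s
    have hblk₀ : ∀ i ≤ d, ∀ b < 2 ^ (d - i),
        (s₀.drop (b * 2 ^ i)).take (2 ^ i) = (s.drop (b * 2 ^ i)).take (2 ^ i) := by
      intro i hi b hb
      have hbd : b * 2 ^ i + 2 ^ i ≤ 2 ^ d := by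
        have : (b + 1) * 2 ^ i ≤ 2 ^ (d - i) * 2 ^ i :=
          Nat.mul_le_mul_right _ (by omega)
        rw [hpow i hi] at this; nlinarith [this]
      rw [hs₀def, List.drop_take, List.take_take, min_eq_left (by omega)]
    have hblk₁ : ∀ i ≤ d, ∀ b < 2 ^ (d - i),
        (s₁.drop (b * 2 ^ i)).take (2 ^ i)
          = (s.drop ((b + 2 ^ (d - i)) * 2 ^ i)).take (2 ^ i) := by
      intro i hi b hb
      rw [hs₁def, List.drop_drop]
      congr 2
      rw [Nat.add_mul, hpow i hi]
      omega
    have hsym₀ : ∀ i ≤ d, ∀ b < 2 ^ (d - i),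
        (∃ j : Fin m, S.expand j = ((s₀.drop (b * 2 ^ i)).take (2 ^ i))) ∧
        (∃ j : Fin m, S.expand j = ((s₀.drop (b * 2 ^ i)).take (2 ^ i)).map (fun c => !c)) := by
      intro i hi b hb
      rw [hblk₀ i hi b hb]
      exact hsym i (by omega) b (by
        have : 2 ^ (d - i) ≤ 2 ^ (d + 1 - i) := Nat.pow_le_pow_right (by norm_num) (by omega)
        omega)
    have hsym₁ : ∀ i ≤ d, ∀ b < 2 ^ (d - i),
        (∃ j : Fin m, S.expand j = ((s₁.drop (b * 2 ^ i)).take (2 ^ i))) ∧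
        (∃ j : Fin m, S.expand j = ((s₁.drop (b * 2 ^ i)).take (2 ^ i)).map (fun c => !c)) := by
      intro i hi b hb
      rw [hblk₁ i hi b hb]
      exact hsym i (by omega) (b + 2 ^ (d - i)) (by
        have h2 : 2 ^ (d + 1 - i) = 2 * 2 ^ (d - i) := by
          rw [← pow_succ']
          congr 1
          omega
        omega)
    by_cases hcase : x < 2 ^ d
    · -- update in left half
      obtain ⟨S₁, hpres, j₁, hj₁⟩ := ih s₀ hs₀ hsym₀ x hcase
      -- symbol for negation of s₁
      obtain ⟨-, j₂, hj₂⟩ := hsym d (by omega) 1 (by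
        have : d + 1 - d = 1 := by omega
        rw [this]; norm_num)
      have hj₂' : S.expand j₂ = s₁.map (fun c => !c) := by
        rw [hj₂]; congr 1
        rw [one_mul, ← hs₁def, List.take_of_length_le (le_of_eq hs₁)]
      set e : Fin m → Fin (m + 2 * d) := Fin.castLE (Nat.le_add_right m (2 * d)) with he
      refine ⟨(S₁.snocC j₁ (e j₂)).snocT false, ?_, (Fin.last (m + 2 * d)).castSucc, ?_⟩
      · intro i
        have : (Fin.castLE (Nat.le_add_right m (2 * (d+1))) i)
            = ((e i).castSucc).castSucc := rfl
        rw [this, SLP.snocT_expand_castSucc, SLP.snocC_expand_castSucc, hpres]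
      · rw [SLP.snocT_expand_castSucc, SLP.snocC_expand_last, hj₁, hpres, hj₂']
        -- string identity
        have h1 : s.take x = s₀.take x := by
          rw [hs₀def, List.take_take, min_eq_left (by omega)]
        have h2 : s.drop x = s₀.drop x ++ s₁ := by
          rw [hs₀def, hs₁def, List.drop_take]
          conv_lhs => rw [← List.take_append_drop (2 ^ d - x) (s.drop x)]
          rw [List.drop_drop]
          congr 2
          omega
        rw [h1, h2, List.map_append, List.append_assoc]
    · -- update in right half
      have hx' : x - 2 ^ d < 2 ^ d := by
        have : 2 ^ (d + 1) = 2 * 2 ^ d := by rw [← pow_succ']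
        omega
      obtain ⟨S₁, hpres, j₁, hj₁⟩ := ih s₁ hs₁ hsym₁ (x - 2 ^ d) hx'
      obtain ⟨⟨j₂, hj₂⟩, -⟩ := hsym (d + 1) le_rfl 0 (by norm_num)
      have hj₂' : S.expand j₂ = s := by
        rw [hj₂, Nat.zero_mul, List.drop_zero, List.take_of_length_le (le_of_eq hs)]
      obtain ⟨⟨j₃, hj₃⟩, -⟩ := hsym d (by omega) 0 (by positivity)
      have hj₃' : S.expand j₃ = s₀ := by
        rw [hj₃, Nat.zero_mul, List.drop_zero, hs₀def]
      set e : Fin m → Fin (m + 2 * d) := Fin.castLE (Nat.le_add_right m (2 * d)) with he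
      refine ⟨(S₁.snocC (e j₃) j₁).snocT false, ?_, (Fin.last (m + 2 * d)).castSucc, ?_⟩
      · intro i
        have : (Fin.castLE (Nat.le_add_right m (2 * (d+1))) i)
            = ((e i).castSucc).castSucc := rfl
        rw [this, SLP.snocT_expand_castSucc, SLP.snocC_expand_castSucc, hpres]
      · rw [SLP.snocT_expand_castSucc, SLP.snocC_expand_last, hj₁, hpres, hj₃']
        have hxd : 2 ^ d ≤ x := by omega
        have h1 : s.take x = s₀ ++ s₁.take (x - 2 ^ d) := by
          rw [hs₀def, hs₁def]
          rw [show x = 2 ^ d + (x - 2 ^ d) by omega, List.take_add]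
          congr 2
          omega
        have h2 : s.drop x = s₁.drop (x - 2 ^ d) := by
          rw [hs₁def, List.drop_drop]
          congr 1
          omega
        rw [h1, h2, List.append_assoc]

/-- let `s` (of length `2^d`) be the root string of a complete binary
tree of depth `d` whose node strings are the dyadic blocks of `s`. Suppose an SLP `S`
already contains, for every node of the tree (every level `i ≤ d` and block `b`), a
symbol for the node's string and a symbol for its bitwise negation. Then for any
update point `x < 2^d`, at most `2d` new symbols suffice to derive the new root
string, in which every character at a position `≥ x` is flipped (the right-child
negation switch along the root-to-leaf path of `x`), while all old symbols keep
their expansions. -/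
theorem stmt11 (d m : ℕ) (s : List Bool) (hs : s.length = 2 ^ d)
    (S : SLP m Bool)
    (hsym : ∀ i ≤ d, ∀ b < 2 ^ (d - i),
      (∃ j : Fin m, S.expand j = ((s.drop (b * 2 ^ i)).take (2 ^ i))) ∧
      (∃ j : Fin m, S.expand j = ((s.drop (b * 2 ^ i)).take (2 ^ i)).map (fun c => !c)))
    (x : ℕ) (hx : x < 2 ^ d) :
    ∃ S' : SLP (m + 2 * d) Bool,
      (∀ i : Fin m, S'.expand (Fin.castLE (Nat.le_add_right m (2 * d)) i) = S.expand i) ∧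
      ∃ j : Fin (m + 2 * d),
        S'.expand j =
          List.ofFn (fun k : Fin (2 ^ d) =>
            xor (s.getD (k : ℕ) false) (decide (x ≤ (k : ℕ)))) := by
  obtain ⟨S', hpres, j, hj⟩ := core m S d s hs hsym x hx
  exact ⟨S', hpres, j, by rw [hj, target_eq (2 ^ d) x s hs (le_of_lt hx)]⟩
end
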